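/- arXiv:2312.06160 — 4 statements merged into one kernel-verified Lean document; each statement's English description precedes it below -/
import Mathlib

section
/- Let A, B ∈ S and set F := A + εB, a polynomial with coefficients in DualNumber R. Then F satisfies the WDVV equation with respect to Δ over DualNumber R if and only if both of the following hold over R: (i) A satisfies the WDVV equation with respect to Δ; and (ii) the linearized (open) WDVV equation holds: for all i,j,k,l ∈ {1,…,n}, Σ_{ν=1}^n Δ_ν[(∂_i∂_j∂_ν A)(∂_ν∂_k∂_l B) + (∂_i∂_j∂_ν B)(∂_ν∂_k∂_l A)] = Σ_{ν=1}^n Δ_ν[(∂_j∂_k∂_ν A)(∂_ν∂_i∂_l B) + (∂_j∂_k∂_ν B)(∂_ν∂_i∂_l A)]. -/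
open MvPolynomial

/-- Third partial derivative `∂ᵢ∂ⱼ∂ₖ F` of a multivariate polynomial. -/
noncomputable def D3 {R : Type*} [CommRing R] {m : ℕ} (F : MvPolynomial (Fin m) R)
    (i j k : Fin m) : MvPolynomial (Fin m) R :=
  pderiv i (pderiv j (pderiv k F))

/-- The WDVV equation for a potential `F` with respect to the units `Δ`. -/
noncomputable def WDVV {R : Type*} [CommRing R] {n : ℕ} (Δ : Fin n → Rˣ)
    (F : MvPolynomial (Fin n) R) : Prop :=
  ∀ i j k l : Fin n,
    ∑ ν, C (Δ ν : R) * D3 F i j ν * D3 F ν k l =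
    ∑ ν, C (Δ ν : R) * D3 F j k ν * D3 F ν i l

/-- The linearized (open) WDVV equation for a pair of potentials `A`, `B` with respect to the
units `Δ`. -/
noncomputable def OpenWDVVLin {R : Type*} [CommRing R] {n : ℕ} (Δ : Fin n → Rˣ)
    (A B : MvPolynomial (Fin n) R) : Prop :=
  ∀ i j k l : Fin n,
    ∑ ν, C (Δ ν : R) * (D3 A i j ν * D3 B ν k l + D3 B i j ν * D3 A ν k l) =
    ∑ ν, C (Δ ν : R) * (D3 A j k ν * D3 B ν i l + D3 B j k ν * D3 A ν i l)

/-- Embedding of a pair of polynomials over `R` as the polynomial `P + ε Q` over `R[ε]`. -/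
noncomputable def emb {R : Type*} [CommRing R] {n : ℕ} (P Q : MvPolynomial (Fin n) R) :
    MvPolynomial (Fin n) (DualNumber R) :=
  MvPolynomial.map (algebraMap R (DualNumber R)) P +
    C DualNumber.eps * MvPolynomial.map (algebraMap R (DualNumber R)) Q

lemma emb_eq_zero_iff {R : Type*} [CommRing R] {n : ℕ} (P Q : MvPolynomial (Fin n) R) :
    emb P Q = 0 ↔ P = 0 ∧ Q = 0 := by
  have hdual : ∀ p q : R,
      (TrivSqZeroExt.inl p + DualNumber.eps * TrivSqZeroExt.inl q = 0) ↔ (p = 0 ∧ q = 0) := by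
    intro p q
    rw [DualNumber.eps, TrivSqZeroExt.inr_mul_inl, TrivSqZeroExt.ext_iff]
    simp [op_smul_eq_mul]
  simp only [emb, MvPolynomial.ext_iff, coeff_add, coeff_C_mul, coeff_map, coeff_zero,
    TrivSqZeroExt.algebraMap_eq_inl, hdual, forall_and]

lemma emb_inj {R : Type*} [CommRing R] {n : ℕ} (P Q P' Q' : MvPolynomial (Fin n) R) :
    emb P Q = emb P' Q' ↔ (P = P' ∧ Q = Q') := by
  rw [← sub_eq_zero, show emb P Q - emb P' Q' = emb (P - P') (Q - Q') by
    simp [emb, map_sub]; ring, emb_eq_zero_iff, sub_eq_zero, sub_eq_zero]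

lemma D3_emb {R : Type*} [CommRing R] {n : ℕ} (A B : MvPolynomial (Fin n) R) (i j k : Fin n) :
    D3 (emb A B) i j k = emb (D3 A i j k) (D3 B i j k) := by
  simp [D3, emb, pderiv_map, pderiv_C_mul]

lemma emb_mul_term {R : Type*} [CommRing R] {n : ℕ} (δ : R)
    (a b c d : MvPolynomial (Fin n) R) :
    C ((algebraMap R (DualNumber R)) δ) * emb a b * emb c d =
      emb (C δ * a * c) (C δ * (a * d + b * c)) := by
  have hε : (C DualNumber.eps : MvPolynomial (Fin n) (DualNumber R)) * C DualNumber.eps = 0 := by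
    rw [← C_mul, DualNumber.eps_mul_eps, C_0]
  have h2 : ∀ X Y Z W V : MvPolynomial (Fin n) (DualNumber R),
      V * (X + C DualNumber.eps * Y) * (Z + C DualNumber.eps * W) =
      V * X * Z + C DualNumber.eps * (V * (X * W + Y * Z)) +
        C DualNumber.eps * C DualNumber.eps * (V * Y * W) := by intros; ring
  simp only [emb, map_mul, map_add, MvPolynomial.map_C]
  rw [h2, hε, zero_mul, add_zero]

lemma emb_sum {R : Type*} [CommRing R] {n : ℕ} {ι : Type*} (s : Finset ι)
    (f g : ι → MvPolynomial (Fin n) R) :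
    ∑ x ∈ s, emb (f x) (g x) = emb (∑ x ∈ s, f x) (∑ x ∈ s, g x) := by
  simp [emb, map_sum, Finset.mul_sum, Finset.sum_add_distrib]

/-- `F = A + εB` satisfies the WDVV equation over the dual numbers iff `A`
satisfies the WDVV equation over `R` and the linearized (open) WDVV equation holds for
`(A, B)`. -/
theorem WDVV_dualNumber_iff {R : Type*} [CommRing R] {n : ℕ} (Δ : Fin n → Rˣ)
    (A B : MvPolynomial (Fin n) R) :
    WDVV (fun ν => Units.map (algebraMap R (DualNumber R)).toMonoidHom (Δ ν))
      (MvPolynomial.map (algebraMap R (DualNumber R)) A +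
        C DualNumber.eps * MvPolynomial.map (algebraMap R (DualNumber R)) B) ↔
    (WDVV Δ A ∧ OpenWDVVLin Δ A B) := by
  have key : ∀ i j k l : Fin n,
      ∑ ν, C ((Units.map (algebraMap R (DualNumber R)).toMonoidHom (Δ ν) :
          (DualNumber R)ˣ) : DualNumber R) * D3 (emb A B) i j ν * D3 (emb A B) ν k l =
      emb (∑ ν, C (Δ ν : R) * D3 A i j ν * D3 A ν k l)
          (∑ ν, C (Δ ν : R) * (D3 A i j ν * D3 B ν k l + D3 B i j ν * D3 A ν k l)) := by
    intro i j k l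
    rw [← emb_sum]
    refine Finset.sum_congr rfl fun ν _ => ?_
    rw [D3_emb, D3_emb]
    exact emb_mul_term (Δ ν : R) _ _ _ _
  have hF : (MvPolynomial.map (algebraMap R (DualNumber R)) A +
      C DualNumber.eps * MvPolynomial.map (algebraMap R (DualNumber R)) B) = emb A B := rfl
  constructor
  · intro h
    refine ⟨fun i j k l => ?_, fun i j k l => ?_⟩
    · exact ((emb_inj _ _ _ _).mp (by rw [← key, ← key]; exact hF ▸ h i j k l)).1
    · exact ((emb_inj _ _ _ _).mp (by rw [← key, ← key]; exact hF ▸ h i j k l)).2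
  · rintro ⟨h1, h2⟩ i j k l
    rw [hF, key, key]
    exact (emb_inj _ _ _ _).mpr ⟨h1 i j k l, h2 i j k l⟩
end

section
/- With notation as in the context, assume the four identity families (Ic), (Ia), (IIa), (IIIa) hold over R. Set F := γ·x_o³ + A + ε·B over DualNumber R, and define on the free module M with basis e_1,…,e_n,e_o over the polynomial ring (DualNumber R)[x_1,…,x_n,x_o] the bilinear product e_α ⋆ e_β = Σ_{ν∈{1,…,n,o}} Δ_ν (∂_α∂_β∂_ν F) e_ν and the bilinear pairing (e_α, e_β) = δ_{αβ} Δ_α^{-1}. Then ⋆ is commutative and associative, and (a ⋆ b, c) = (a, b ⋆ c) for all a, b, c ∈ M; that is, (M, ⋆, (−,−)) is a (not necessarily unital) Frobenius algebra. -/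
open MvPolynomial

/-- The quantum product associated to a potential `F` with respect to the inverse diagonal
metric entries `Δ`: the bilinear product on the free module determined by
`e_α ⋆ e_β = Σ_ν Δ_ν (∂_α∂_β∂_ν F) e_ν`. -/
noncomputable def qmul {R : Type*} [CommRing R] {n : ℕ} (Δ : Fin n → Rˣ)
    (F : MvPolynomial (Fin n) R) (a b : Fin n → MvPolynomial (Fin n) R) :
    Fin n → MvPolynomial (Fin n) R :=
  fun ν => ∑ i, ∑ j, a i * b j * (C (Δ ν : R) * D3 F i j ν)

/-- The pairing associated to `Δ`: the bilinear form with `(e_α, e_β) = δ_{αβ} Δ_α⁻¹`. -/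
noncomputable def qpair {R : Type*} [CommRing R] {n : ℕ} (Δ : Fin n → Rˣ)
    (a b : Fin n → MvPolynomial (Fin n) R) : MvPolynomial (Fin n) R :=
  ∑ i, a i * b i * C (((Δ i)⁻¹ : Rˣ) : R)

/-!
The product is commutative and compatible with the pairing for every potential `F`, because
`(a ⋆ b, c) = ∑ aᵢ bⱼ c_k ∂ᵢ∂ⱼ∂_k F` is symmetric in `a, b, c`. It is associative exactly when
`F` satisfies the WDVV equations `∑_ν Δ_ν F_{ijν} F_{νkl} = ∑_ν Δ_ν F_{jkν} F_{νil}`.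
Since `ε² = 0`, for `F = F₀ + ε B` these split into WDVV for `F₀ = γ x_o³ + A` and their
linearization at `F₀` in the direction `B`. As `∂_o A = 0`, a contraction through the index `o`
only sees the coefficient `6γ` of `∂_o³ F₀`, and a case split on which of `i, j, k, l` equal `o`
reduces both systems to (Ic), (Ia), (IIa), (IIIa) and the symmetry of third derivatives.
-/

theorem MvPolynomial.pderiv_pderiv_comm {R σ : Type*} [CommRing R] (i j : σ)
    (p : MvPolynomial σ R) : pderiv i (pderiv j p) = pderiv j (pderiv i p) := by
  classical
  have h : ⁅pderiv i, pderiv j⁆ = (0 : Derivation R (MvPolynomial σ R) (MvPolynomial σ R)) :=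
    derivation_ext fun k => by
      rw [Derivation.commutator_apply]
      simp [pderiv_X, Pi.single_apply, apply_ite]
  simpa [Derivation.commutator_apply, sub_eq_zero] using congr($h p)

theorem MvPolynomial.C_units_mul_C_inv {R σ : Type*} [CommRing R] (u : Rˣ) :
    (C (u : R) * C ((u⁻¹ : Rˣ) : R) : MvPolynomial σ R) = 1 := by
  rw [← map_mul, Units.mul_inv, map_one]

section D3

variable {R : Type*} [CommRing R] {m : ℕ}

theorem D3_comm₁₂ (p : MvPolynomial (Fin m) R) (i j k : Fin m) : D3 p i j k = D3 p j i k :=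
  pderiv_pderiv_comm i j _

theorem D3_comm₂₃ (p : MvPolynomial (Fin m) R) (i j k : Fin m) : D3 p i j k = D3 p i k j := by
  rw [D3, D3, pderiv_pderiv_comm j k]

theorem D3_add (p q : MvPolynomial (Fin m) R) (i j k : Fin m) :
    D3 (p + q) i j k = D3 p i j k + D3 q i j k := by
  simp only [D3, map_add]

theorem D3_C_mul (c : R) (p : MvPolynomial (Fin m) R) (i j k : Fin m) :
    D3 (C c * p) i j k = C c * D3 p i j k := by
  simp only [D3, pderiv_C_mul]

theorem D3_map {S : Type*} [CommRing S] (f : R →+* S) (p : MvPolynomial (Fin m) R)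
    (i j k : Fin m) : D3 (map f p) i j k = map f (D3 p i j k) := by
  simp only [D3, pderiv_map]

theorem D3_eq_zero_of_pderiv_eq_zero {p : MvPolynomial (Fin m) R} {a : Fin m}
    (h : pderiv a p = 0) :
    (∀ i j, D3 p a i j = 0) ∧ (∀ i j, D3 p i a j = 0) ∧ (∀ i j, D3 p i j a = 0) := by
  have h₃ : ∀ i j, D3 p i j a = 0 := fun i j => by simp only [D3, h, map_zero]
  exact ⟨fun i j => by rw [D3_comm₁₂, D3_comm₂₃, h₃], fun i j => by rw [D3_comm₂₃, h₃], h₃⟩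

theorem D3_C_mul_X_pow_three (c : R) (a i j k : Fin m) :
    D3 (C c * X a ^ 3) i j k = if i = a ∧ j = a ∧ k = a then C (6 * c) else 0 := by
  rw [show (X a ^ 3 : MvPolynomial (Fin m) R) = X a * X a * X a by ring, C_mul, map_ofNat]
  by_cases hk : k = a <;> by_cases hj : j = a <;> by_cases hi : i = a <;>
    simp [D3, hi, hj, hk, pderiv_X]
  ring

end D3

section Frobenius

variable {R : Type*} [CommRing R] {m : ℕ} (Δ : Fin m → Rˣ) (F : MvPolynomial (Fin m) R)

theorem qmul_comm (a b : Fin m → MvPolynomial (Fin m) R) : qmul Δ F a b = qmul Δ F b a := by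
  ext1 ν
  rw [qmul, qmul, Finset.sum_comm]
  refine Fintype.sum_congr _ _ fun i => Fintype.sum_congr _ _ fun j => ?_
  rw [D3_comm₁₂]
  ring

theorem qpair_qmul_left_eq_sum (a b c : Fin m → MvPolynomial (Fin m) R) :
    qpair Δ (qmul Δ F a b) c = ∑ i, ∑ j, ∑ k, a i * b j * c k * D3 F i j k := by
  simp only [qpair, qmul, Finset.sum_mul]
  rw [Finset.sum_comm]
  refine Fintype.sum_congr _ _ fun i => ?_
  rw [Finset.sum_comm]
  refine Fintype.sum_congr _ _ fun j => Fintype.sum_congr _ _ fun k => ?_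
  linear_combination a i * b j * c k * D3 F i j k * C_units_mul_C_inv (Δ k)

theorem qpair_qmul_right_eq_sum (a b c : Fin m → MvPolynomial (Fin m) R) :
    qpair Δ a (qmul Δ F b c) = ∑ i, ∑ j, ∑ k, a i * b j * c k * D3 F i j k := by
  simp only [qpair, qmul, Finset.mul_sum, Finset.sum_mul]
  refine Fintype.sum_congr _ _ fun i => Fintype.sum_congr _ _ fun j =>
    Fintype.sum_congr _ _ fun k => ?_
  rw [D3_comm₂₃ F j k i, D3_comm₁₂ F j i k]
  linear_combination a i * b j * c k * D3 F i j k * C_units_mul_C_inv (Δ i)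

theorem qpair_qmul (a b c : Fin m → MvPolynomial (Fin m) R) :
    qpair Δ (qmul Δ F a b) c = qpair Δ a (qmul Δ F b c) := by
  rw [qpair_qmul_left_eq_sum, qpair_qmul_right_eq_sum]

noncomputable def d3Contract (F G : MvPolynomial (Fin m) R) (i j k l : Fin m) :
    MvPolynomial (Fin m) R :=
  ∑ ν, C (Δ ν : R) * D3 F i j ν * D3 G ν k l

def IsWDVV : Prop :=
  ∀ i j k l, d3Contract Δ F F i j k l = d3Contract Δ F F j k i l

def IsLinearizedWDVV (F₀ F₁ : MvPolynomial (Fin m) R) : Prop :=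
  ∀ i j k l, d3Contract Δ F₀ F₁ i j k l + d3Contract Δ F₁ F₀ i j k l =
    d3Contract Δ F₀ F₁ j k i l + d3Contract Δ F₁ F₀ j k i l

theorem qmul_qmul_left_apply (a b c : Fin m → MvPolynomial (Fin m) R) (μ : Fin m) :
    qmul Δ F (qmul Δ F a b) c μ =
      ∑ i, ∑ j, ∑ k, a i * b j * c k * (C (Δ μ : R) * d3Contract Δ F F i j k μ) := by
  simp only [qmul, d3Contract, Finset.sum_mul, Finset.mul_sum]
  rw [Finset.sum_comm_cycle]
  refine Fintype.sum_congr _ _ fun i => ?_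
  rw [Finset.sum_comm_cycle]
  refine Fintype.sum_congr _ _ fun j => ?_
  rw [Finset.sum_comm]
  refine Fintype.sum_congr _ _ fun k => Fintype.sum_congr _ _ fun ν => ?_
  ring

theorem qmul_qmul_right_apply (a b c : Fin m → MvPolynomial (Fin m) R) (μ : Fin m) :
    qmul Δ F a (qmul Δ F b c) μ =
      ∑ i, ∑ j, ∑ k, a i * b j * c k * (C (Δ μ : R) * d3Contract Δ F F j k i μ) := by
  simp only [qmul, d3Contract, Finset.sum_mul, Finset.mul_sum]
  refine Fintype.sum_congr _ _ fun i => ?_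
  rw [← Finset.sum_comm_cycle]
  refine Fintype.sum_congr _ _ fun j => Fintype.sum_congr _ _ fun k =>
    Fintype.sum_congr _ _ fun ν => ?_
  rw [D3_comm₁₂ F i ν μ]
  ring

theorem IsWDVV.qmul_assoc (h : IsWDVV Δ F) (a b c : Fin m → MvPolynomial (Fin m) R) :
    qmul Δ F (qmul Δ F a b) c = qmul Δ F a (qmul Δ F b c) := by
  ext1 μ
  rw [qmul_qmul_left_apply, qmul_qmul_right_apply]
  refine Fintype.sum_congr _ _ fun i => Fintype.sum_congr _ _ fun j =>
    Fintype.sum_congr _ _ fun k => ?_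
  rw [h]

end Frobenius

section DualNumber

variable {R : Type*} [CommRing R] {m : ℕ} {Δ : Fin m → Rˣ}

local notation "ι" => algebraMap R (DualNumber R)

theorem d3Contract_map_add_eps_mul (F₀ F₁ : MvPolynomial (Fin m) R) (i j k l : Fin m) :
    d3Contract (fun ν => Units.map (ι : R →+* DualNumber R).toMonoidHom (Δ ν))
        (map ι F₀ + C DualNumber.eps * map ι F₁) (map ι F₀ + C DualNumber.eps * map ι F₁)
        i j k l =
      map ι (d3Contract Δ F₀ F₀ i j k l) +
        C DualNumber.eps * map ι (d3Contract Δ F₀ F₁ i j k l + d3Contract Δ F₁ F₀ i j k l) := by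
  have hε : (C DualNumber.eps * C DualNumber.eps : MvPolynomial (Fin m) (DualNumber R)) = 0 := by
    rw [← map_mul, DualNumber.eps_mul_eps, map_zero]
  simp only [d3Contract, D3_add, D3_C_mul, D3_map, map_add, map_sum, map_mul, map_C,
    Finset.mul_sum, ← Finset.sum_add_distrib]
  refine Fintype.sum_congr _ _ fun ν => ?_
  simp only [Units.coe_map, RingHom.toMonoidHom_eq_coe, MonoidHom.coe_coe]
  linear_combination C (ι (Δ ν)) * map ι (D3 F₁ i j ν) * map ι (D3 F₁ ν k l) * hε

theorem IsWDVV.map_add_eps_mul {F₀ F₁ : MvPolynomial (Fin m) R} (h₀ : IsWDVV Δ F₀)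
    (h₁ : IsLinearizedWDVV Δ F₀ F₁) :
    IsWDVV (fun ν => Units.map (ι : R →+* DualNumber R).toMonoidHom (Δ ν))
      (map ι F₀ + C DualNumber.eps * map ι F₁) := by
  intro i j k l
  rw [d3Contract_map_add_eps_mul, d3Contract_map_add_eps_mul, h₀, h₁]

end DualNumber

section OpenPotential

variable {R : Type*} [CommRing R] {n : ℕ}

theorem d3Contract_snoc_one (Δ : Fin n → Rˣ) (F G : MvPolynomial (Fin (n + 1)) R)
    (i j k l : Fin (n + 1)) :
    d3Contract (Fin.snoc Δ 1 : Fin (n + 1) → Rˣ) F G i j k l =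
      ∑ ν : Fin n, C (Δ ν : R) * D3 F i j ν.castSucc * D3 G ν.castSucc k l +
        D3 F i j (Fin.last n) * D3 G (Fin.last n) k l := by
  simp [d3Contract, Fin.sum_univ_castSucc]

theorem D3_C_mul_X_pow_three_add (γ : R) (A : MvPolynomial (Fin (n + 1)) R) (i j k : Fin (n + 1)) :
    D3 (C γ * X (Fin.last n) ^ 3 + A) i j k =
      (if i = Fin.last n ∧ j = Fin.last n ∧ k = Fin.last n then C (6 * γ) else 0) + D3 A i j k := by
  rw [D3_add, D3_C_mul_X_pow_three]

theorem isWDVV_cubic_add (Δ : Fin n → Rˣ) (γ : R) {A : MvPolynomial (Fin (n + 1)) R}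
    (hA : pderiv (Fin.last n) A = 0)
    (hIc : ∀ i j k l : Fin n,
        ∑ ν, C (Δ ν : R) * D3 A i.castSucc j.castSucc ν.castSucc *
              D3 A ν.castSucc k.castSucc l.castSucc =
        ∑ ν, C (Δ ν : R) * D3 A j.castSucc k.castSucc ν.castSucc *
              D3 A ν.castSucc i.castSucc l.castSucc) :
    IsWDVV (Fin.snoc Δ 1 : Fin (n + 1) → Rˣ) (C γ * X (Fin.last n) ^ 3 + A) := by
  obtain ⟨h₁, h₂, h₃⟩ := D3_eq_zero_of_pderiv_eq_zero hA
  intro i j k l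
  rcases Fin.eq_castSucc_or_eq_last i with ⟨i, rfl⟩ | rfl <;>
  rcases Fin.eq_castSucc_or_eq_last j with ⟨j, rfl⟩ | rfl <;>
  rcases Fin.eq_castSucc_or_eq_last k with ⟨k, rfl⟩ | rfl <;>
  rcases Fin.eq_castSucc_or_eq_last l with ⟨l, rfl⟩ | rfl <;>
  simp only [d3Contract_snoc_one, D3_C_mul_X_pow_three_add, Fin.castSucc_ne_last, and_self,
    and_false, and_true, ↓reduceIte, h₁, h₂, h₃, add_zero, zero_add, mul_zero, zero_mul,
    Finset.sum_const_zero]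
  -- only the case without the index `o` survives
  exact hIc i j k l

theorem isLinearizedWDVV_cubic_add (Δ : Fin n → Rˣ) (γ : R) {A B : MvPolynomial (Fin (n + 1)) R}
    (hA : pderiv (Fin.last n) A = 0)
    (hIa : ∀ i j k l : Fin n,
        ∑ ν, C (Δ ν : R) * (D3 A i.castSucc j.castSucc ν.castSucc *
              D3 B ν.castSucc k.castSucc l.castSucc +
              D3 B i.castSucc j.castSucc ν.castSucc *
              D3 A ν.castSucc k.castSucc l.castSucc) =
        ∑ ν, C (Δ ν : R) * (D3 A j.castSucc k.castSucc ν.castSucc *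
              D3 B ν.castSucc i.castSucc l.castSucc +
              D3 B j.castSucc k.castSucc ν.castSucc *
              D3 A ν.castSucc i.castSucc l.castSucc))
    (hIIa : ∀ i j k : Fin n,
        ∑ ν, C (Δ ν : R) * D3 A i.castSucc j.castSucc ν.castSucc *
              D3 B ν.castSucc k.castSucc (Fin.last n) =
        ∑ ν, C (Δ ν : R) * D3 A j.castSucc k.castSucc ν.castSucc *
              D3 B ν.castSucc i.castSucc (Fin.last n))
    (hIIIa : ∀ i j : Fin n,
        ∑ ν, C (Δ ν : R) * D3 A i.castSucc j.castSucc ν.castSucc *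
              D3 B ν.castSucc (Fin.last n) (Fin.last n) +
          C (6 * γ) * D3 B i.castSucc j.castSucc (Fin.last n) = 0) :
    IsLinearizedWDVV (Fin.snoc Δ 1 : Fin (n + 1) → Rˣ) (C γ * X (Fin.last n) ^ 3 + A) B := by
  obtain ⟨h₁, h₂, h₃⟩ := D3_eq_zero_of_pderiv_eq_zero hA
  intro i j k l
  rcases Fin.eq_castSucc_or_eq_last i with ⟨i, rfl⟩ | rfl <;>
  rcases Fin.eq_castSucc_or_eq_last j with ⟨j, rfl⟩ | rfl <;>
  rcases Fin.eq_castSucc_or_eq_last k with ⟨k, rfl⟩ | rfl <;>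
  rcases Fin.eq_castSucc_or_eq_last l with ⟨l, rfl⟩ | rfl <;>
  simp only [d3Contract_snoc_one, D3_C_mul_X_pow_three_add, Fin.castSucc_ne_last, and_self,
    and_false, and_true, ↓reduceIte, h₁, h₂, h₃, add_zero, zero_add, mul_zero, zero_mul,
    Finset.sum_const_zero]
  -- Sorting the arguments of every `D3` and the factors of every product turns each remaining
  -- case into an instance of (Ia), (IIa) or (IIIa), or into the symmetry of `D3 B`.
  · simpa only [mul_add, add_mul, Finset.sum_add_distrib, D3_comm₁₂, D3_comm₂₃, mul_comm,
      mul_left_comm, mul_assoc, add_comm] using hIa i j k l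
  · simpa only [D3_comm₁₂, D3_comm₂₃, mul_comm, mul_left_comm, mul_assoc, add_comm]
      using hIIa i j k
  · simpa only [D3_comm₁₂, D3_comm₂₃, mul_comm, mul_left_comm, mul_assoc, add_comm]
      using (hIIa l i j).symm
  · simpa only [D3_comm₁₂, D3_comm₂₃, mul_comm, mul_left_comm, mul_assoc, add_comm]
      using hIIIa i j
  · simpa only [D3_comm₁₂, D3_comm₂₃, mul_comm, mul_left_comm, mul_assoc, add_comm]
      using hIIa k l i
  · simpa only [D3_comm₁₂, D3_comm₂₃, mul_comm, mul_left_comm, mul_assoc, add_comm]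
      using (hIIIa i l).symm
  · simp only [D3_comm₁₂, mul_comm]
  · simpa only [D3_comm₁₂, D3_comm₂₃, mul_comm, mul_left_comm, mul_assoc, add_comm]
      using (hIIa j k l).symm
  · simpa only [D3_comm₁₂, D3_comm₂₃, mul_comm, mul_left_comm, mul_assoc, add_comm]
      using (hIIIa j k).symm
  · simp only [D3_comm₁₂, mul_comm]
  · simpa only [D3_comm₁₂, D3_comm₂₃, mul_comm, mul_left_comm, mul_assoc, add_comm]
      using hIIIa k l
  · simp only [D3_comm₁₂, mul_comm]

end OpenPotential

/-- assuming the identities (Ic), (Ia), (IIa), (IIIa), the quantum product of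
`F := γ·x_o³ + A + ε·B` over the dual numbers (with respect to `(Δ₁,…,Δₙ,1)`) is commutative
and associative, and is compatible with the diagonal pairing: `(M, ⋆, (−,−))` is a (not
necessarily unital) Frobenius algebra. -/
theorem open_potential_frobenius_algebra {R : Type*} [CommRing R] {n : ℕ}
    (Δ : Fin n → Rˣ) (γ : R)
    (A B : MvPolynomial (Fin (n + 1)) R) (hA : pderiv (Fin.last n) A = 0)
    -- (Ic)
    (hIc : ∀ i j k l : Fin n,
        ∑ ν, C (Δ ν : R) * D3 A i.castSucc j.castSucc ν.castSucc *
              D3 A ν.castSucc k.castSucc l.castSucc =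
        ∑ ν, C (Δ ν : R) * D3 A j.castSucc k.castSucc ν.castSucc *
              D3 A ν.castSucc i.castSucc l.castSucc)
    -- (Ia)
    (hIa : ∀ i j k l : Fin n,
        ∑ ν, C (Δ ν : R) * (D3 A i.castSucc j.castSucc ν.castSucc *
              D3 B ν.castSucc k.castSucc l.castSucc +
              D3 B i.castSucc j.castSucc ν.castSucc *
              D3 A ν.castSucc k.castSucc l.castSucc) =
        ∑ ν, C (Δ ν : R) * (D3 A j.castSucc k.castSucc ν.castSucc *
              D3 B ν.castSucc i.castSucc l.castSucc +
              D3 B j.castSucc k.castSucc ν.castSucc *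
              D3 A ν.castSucc i.castSucc l.castSucc))
    -- (IIa)
    (hIIa : ∀ i j k : Fin n,
        ∑ ν, C (Δ ν : R) * D3 A i.castSucc j.castSucc ν.castSucc *
              D3 B ν.castSucc k.castSucc (Fin.last n) =
        ∑ ν, C (Δ ν : R) * D3 A j.castSucc k.castSucc ν.castSucc *
              D3 B ν.castSucc i.castSucc (Fin.last n))
    -- (IIIa)
    (hIIIa : ∀ i j : Fin n,
        ∑ ν, C (Δ ν : R) * D3 A i.castSucc j.castSucc ν.castSucc *
              D3 B ν.castSucc (Fin.last n) (Fin.last n) +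
          C (6 * γ) * D3 B i.castSucc j.castSucc (Fin.last n) = 0) :
    ∀ ΔD : Fin (n + 1) → (DualNumber R)ˣ,
      ΔD = (fun ν => Units.map (algebraMap R (DualNumber R)).toMonoidHom
              ((Fin.snoc Δ 1 : Fin (n+1) → Rˣ) ν)) →
    ∀ F : MvPolynomial (Fin (n + 1)) (DualNumber R),
      F = C (algebraMap R (DualNumber R) γ) * X (Fin.last n) ^ 3 +
            MvPolynomial.map (algebraMap R (DualNumber R)) A +
            C DualNumber.eps * MvPolynomial.map (algebraMap R (DualNumber R)) B →
      ((∀ a b, qmul ΔD F a b = qmul ΔD F b a) ∧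
       (∀ a b c, qmul ΔD F (qmul ΔD F a b) c = qmul ΔD F a (qmul ΔD F b c)) ∧
       (∀ a b c, qpair ΔD (qmul ΔD F a b) c = qpair ΔD a (qmul ΔD F b c))) := by
  rintro ΔD rfl F rfl
  have hWDVV := (isWDVV_cubic_add Δ γ hA hIc).map_add_eps_mul
    (isLinearizedWDVV_cubic_add Δ γ hA hIa hIIa hIIIa)
  rw [map_add, map_mul, map_C, map_pow, map_X] at hWDVV
  exact ⟨qmul_comm _ _, hWDVV.qmul_assoc, qpair_qmul _ _⟩
end

section
/- Let A, B, G ∈ R[x_1,…,x_n] and assume the following five identity families (all sums over ν ∈ {1,…,n}): (Ic) for all i,j,k,l: Σ_ν Δ_ν(∂_i∂_j∂_ν A)(∂_ν∂_k∂_l A) = Σ_ν Δ_ν(∂_j∂_k∂_ν A)(∂_ν∂_i∂_l A); (Ib) the same with B in place of A; (Ia) for all i,j,k,l: Σ_ν Δ_ν[(∂_i∂_j∂_ν A)(∂_ν∂_k∂_l B) + (∂_i∂_j∂_ν B)(∂_ν∂_k∂_l A)] = Σ_ν Δ_ν[(∂_j∂_k∂_ν A)(∂_ν∂_i∂_l B)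 + (∂_j∂_k∂_ν B)(∂_ν∂_i∂_l A)]; (IIa) for all i,j,k: Σ_ν Δ_ν(∂_i∂_j∂_ν A)(∂_ν∂_k G) = Σ_ν Δ_ν(∂_j∂_k∂_ν A)(∂_ν∂_i G); (IIb) the same with B in place of A. Regard A, B, G as elements of S' = R[x_1,…,x_n,x_o] (independent of x_o) and define the vector potential F = (F^1,…,F^n,F^o) by F^i := Δ_i·∂_i(A+B) for i = 1,…,n and F^o := G. Then F satisfies the open WDVV equations in all n+1 indices: for all i,j,k,l ∈ {1,…,n,o}, Σ_{μ∈{1,…,n,o}} (∂_i∂_μ F^j)(∂_k∂_l F^μ) = Σ_{μ∈{1,…,n,o}} (∂_k∂_μ F^j)(∂_i∂_l F^μ). -/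
/-!
Every component of the vector potential lies in the image of `R[x₁,…,xₙ] → R[x₁,…,xₙ,x_o]`,
so every second derivative involving `x_o` vanishes and the open WDVV equations only have to be
checked for `i, k, l ≤ n`, with the sum running over `μ ≤ n`. Writing `S = A + B`, the identities
(Ia), (Ib), (Ic) add up to the closed WDVV equations for `S`, and (IIa), (IIb) to the compatibility
of `S` with `G`. For `j ≤ n` the equation is `Δ_j` times the closed WDVV equation for `S`, and for
`j = o` it is the compatibility of `S` with `G`.
-/

open MvPolynomial

/-- Second partial derivative `∂ᵢ∂ⱼ F` of a multivariate polynomial. -/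
noncomputable def D2 {R : Type*} [CommRing R] {m : ℕ} (F : MvPolynomial (Fin m) R)
    (i j : Fin m) : MvPolynomial (Fin m) R :=
  pderiv i (pderiv j F)

/-- The open WDVV equations for a vector potential `F`. -/
noncomputable def OpenWDVV {R : Type*} [CommRing R] {n : ℕ}
    (F : Fin n → MvPolynomial (Fin n) R) : Prop :=
  ∀ i j k l : Fin n,
    ∑ μ, D2 (F j) i μ * D2 (F μ) k l = ∑ μ, D2 (F j) k μ * D2 (F μ) i l

namespace MvPolynomial

variable {R σ τ : Type*} [CommSemiring R]

theorem pderiv_pderiv_comm_s7 (i j : σ) (f : MvPolynomial σ R) :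
    pderiv i (pderiv j f) = pderiv j (pderiv i f) := by
  classical
  induction f using MvPolynomial.induction_on with
  | C a => simp
  | add p q hp hq => simp [hp, hq]
  | mul_X p k hp =>
    simp only [pderiv_mul, map_add, pderiv_X, hp, Pi.single_apply]
    split_ifs <;> simp; ring

theorem pderiv_rename_of_notMem_range {f : σ → τ} {i : τ} (hi : i ∉ Set.range f)
    (P : MvPolynomial σ R) : pderiv i (rename f P) = 0 :=
  pderiv_eq_zero_of_notMem_vars fun h => hi <| by
    obtain ⟨x, -, hx⟩ := mem_vars_rename f P h
    exact ⟨x, hx⟩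

end MvPolynomial

section Derivatives

variable {R : Type*} [CommRing R] {m n : ℕ}

theorem D2_comm (F : MvPolynomial (Fin m) R) (i j : Fin m) : D2 F i j = D2 F j i :=
  pderiv_pderiv_comm_s7 i j F

theorem D3_comm_left (F : MvPolynomial (Fin m) R) (i j k : Fin m) : D3 F i j k = D3 F j i k :=
  pderiv_pderiv_comm_s7 i j _

theorem D3_comm_right (F : MvPolynomial (Fin m) R) (i j k : Fin m) : D3 F i j k = D3 F i k j :=
  congrArg (pderiv i) (pderiv_pderiv_comm_s7 j k F)

theorem D2_C_mul_pderiv (a : R) (F : MvPolynomial (Fin m) R) (i j k : Fin m) :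
    D2 (C a * pderiv k F) i j = C a * D3 F i j k := by
  simp only [D2, D3, pderiv_C_mul]

theorem D2_rename_castSucc (P : MvPolynomial (Fin n) R) (i j : Fin n) :
    D2 (rename Fin.castSucc P) i.castSucc j.castSucc = rename Fin.castSucc (D2 P i j) := by
  simp only [D2, pderiv_rename (Fin.castSucc_injective n)]

theorem D2_rename_castSucc_last (P : MvPolynomial (Fin n) R) (i : Fin (n + 1)) :
    D2 (rename Fin.castSucc P) i (Fin.last n) = 0 := by
  have hlast : Fin.last n ∉ Set.range Fin.castSucc := fun ⟨j, hj⟩ => Fin.castSucc_ne_last j hj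
  simp only [D2, pderiv_rename_of_notMem_range hlast, map_zero]

theorem D2_rename_castSucc_last_left (P : MvPolynomial (Fin n) R) (i : Fin (n + 1)) :
    D2 (rename Fin.castSucc P) (Fin.last n) i = 0 := by
  rw [D2_comm, D2_rename_castSucc_last]

end Derivatives

section WDVV

variable {R : Type*} [CommRing R] {n : ℕ}

theorem openWDVV_rename_castSucc {P : Fin (n + 1) → MvPolynomial (Fin n) R}
    (h : ∀ (j : Fin (n + 1)) (i k l : Fin n),
      ∑ ν : Fin n, D2 (P j) i ν * D2 (P ν.castSucc) k l =
        ∑ ν : Fin n, D2 (P j) k ν * D2 (P ν.castSucc) i l) :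
    OpenWDVV fun μ => rename Fin.castSucc (P μ) := by
  intro i j k l
  induction i using Fin.lastCases with
  | last => simp only [D2_rename_castSucc_last_left, zero_mul, mul_zero, Finset.sum_const_zero]
  | cast i => ?_
  induction k using Fin.lastCases with
  | last => simp only [D2_rename_castSucc_last_left, zero_mul, mul_zero, Finset.sum_const_zero]
  | cast k => ?_
  induction l using Fin.lastCases with
  | last => simp only [D2_rename_castSucc_last, mul_zero, Finset.sum_const_zero]
  | cast l => ?_
  simp only [Fin.sum_univ_castSucc, D2_rename_castSucc_last, zero_mul, add_zero,
    D2_rename_castSucc, ← map_mul, ← map_sum, h]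

/-- `η ν` stands for the diagonal inverse metric `h^{νν}` of the paper. -/
def ClosedWDVV (η : Fin n → R) (A : MvPolynomial (Fin n) R) : Prop :=
  ∀ i j k l : Fin n,
    ∑ ν, C (η ν) * D3 A i j ν * D3 A ν k l = ∑ ν, C (η ν) * D3 A j k ν * D3 A ν i l

def ClosedOpenCompatible (η : Fin n → R) (A G : MvPolynomial (Fin n) R) : Prop :=
  ∀ i j k : Fin n,
    ∑ ν, C (η ν) * D3 A i j ν * D2 G ν k = ∑ ν, C (η ν) * D3 A j k ν * D2 G ν i

theorem sum_D3_add_mul_D3_add (η : Fin n → R) (A B : MvPolynomial (Fin n) R) (i j k l : Fin n) :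
    ∑ ν, C (η ν) * D3 (A + B) i j ν * D3 (A + B) ν k l =
      ∑ ν, C (η ν) * D3 A i j ν * D3 A ν k l +
        ∑ ν, C (η ν) * (D3 A i j ν * D3 B ν k l + D3 B i j ν * D3 A ν k l) +
        ∑ ν, C (η ν) * D3 B i j ν * D3 B ν k l := by
  simp only [D3, map_add, ← Finset.sum_add_distrib]
  exact Finset.sum_congr rfl fun _ _ => by ring

theorem ClosedWDVV.add {η : Fin n → R} {A B : MvPolynomial (Fin n) R} (hA : ClosedWDVV η A)
    (hB : ClosedWDVV η B)
    (hAB : ∀ i j k l : Fin n,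
      ∑ ν, C (η ν) * (D3 A i j ν * D3 B ν k l + D3 B i j ν * D3 A ν k l) =
        ∑ ν, C (η ν) * (D3 A j k ν * D3 B ν i l + D3 B j k ν * D3 A ν i l)) :
    ClosedWDVV η (A + B) := by
  intro i j k l
  rw [sum_D3_add_mul_D3_add, sum_D3_add_mul_D3_add, hA, hB, hAB]

theorem ClosedOpenCompatible.add {η : Fin n → R} {A B G : MvPolynomial (Fin n) R}
    (hA : ClosedOpenCompatible η A G) (hB : ClosedOpenCompatible η B G) :
    ClosedOpenCompatible η (A + B) G := by
  intro i j k
  have expand : ∀ a b c : Fin n, ∑ ν, C (η ν) * D3 (A + B) a b ν * D2 G ν c =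
      ∑ ν, C (η ν) * D3 A a b ν * D2 G ν c + ∑ ν, C (η ν) * D3 B a b ν * D2 G ν c := by
    intro a b c
    simp only [D3, map_add, ← Finset.sum_add_distrib]
    exact Finset.sum_congr rfl fun _ _ => by ring
  rw [expand, expand, hA, hB]

theorem ClosedWDVV.sum_D2_mul_D2 {η : Fin n → R} {S : MvPolynomial (Fin n) R}
    (hS : ClosedWDVV η S) (i j k l : Fin n) :
    ∑ ν, D2 (C (η j) * pderiv j S) i ν * D2 (C (η ν) * pderiv ν S) k l =
      ∑ ν, D2 (C (η j) * pderiv j S) k ν * D2 (C (η ν) * pderiv ν S) i l := by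
  simp only [D2_C_mul_pderiv]
  calc ∑ ν, C (η j) * D3 S i ν j * (C (η ν) * D3 S k l ν)
      = C (η j) * ∑ ν, C (η ν) * D3 S i j ν * D3 S ν k l := by
        rw [Finset.mul_sum]
        refine Finset.sum_congr rfl fun ν _ => ?_
        rw [D3_comm_right S i ν j, D3_comm_left S ν k l, D3_comm_right S k ν l]
        ring
    _ = C (η j) * ∑ ν, C (η ν) * D3 S j k ν * D3 S ν i l := by rw [hS]
    _ = ∑ ν, C (η j) * D3 S k ν j * (C (η ν) * D3 S i l ν) := by
        rw [Finset.mul_sum]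
        refine Finset.sum_congr rfl fun ν _ => ?_
        rw [D3_comm_right S k ν j, D3_comm_left S k j ν, D3_comm_left S ν i l,
          D3_comm_right S i ν l]
        ring

theorem ClosedOpenCompatible.sum_D2_mul_D2 {η : Fin n → R} {S G : MvPolynomial (Fin n) R}
    (hSG : ClosedOpenCompatible η S G) (i k l : Fin n) :
    ∑ ν, D2 G i ν * D2 (C (η ν) * pderiv ν S) k l =
      ∑ ν, D2 G k ν * D2 (C (η ν) * pderiv ν S) i l := by
  simp only [D2_C_mul_pderiv]
  calc ∑ ν, D2 G i ν * (C (η ν) * D3 S k l ν)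
      = ∑ ν, C (η ν) * D3 S k l ν * D2 G ν i := by
        refine Finset.sum_congr rfl fun ν _ => ?_
        rw [D2_comm]
        ring
    _ = ∑ ν, C (η ν) * D3 S l i ν * D2 G ν k := hSG k l i
    _ = ∑ ν, D2 G k ν * (C (η ν) * D3 S i l ν) := by
        refine Finset.sum_congr rfl fun ν _ => ?_
        rw [D3_comm_left, D2_comm]
        ring

end WDVV

/-- given the identities (Ic), (Ib), (Ia), (IIa), (IIb) for `A`, `B`, `G` in
`R[x₁,…,xₙ]`, the vector potential on `R[x₁,…,xₙ,x_o]` with components `F^i := Δ_i·∂_i(A+B)`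
(for `i = 1,…,n`) and `F^o := G`, all regarded as independent of `x_o`, satisfies the open
WDVV equations in all `n+1` indices. -/
theorem openWDVV_of_open_closed_identities {R : Type*} [CommRing R] {n : ℕ}
    (Δ : Fin n → Rˣ) (A B G : MvPolynomial (Fin n) R)
    -- (Ic)
    (hIc : ∀ i j k l : Fin n,
        ∑ ν, C (Δ ν : R) * D3 A i j ν * D3 A ν k l =
        ∑ ν, C (Δ ν : R) * D3 A j k ν * D3 A ν i l)
    -- (Ib)
    (hIb : ∀ i j k l : Fin n,
        ∑ ν, C (Δ ν : R) * D3 B i j ν * D3 B ν k l =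
        ∑ ν, C (Δ ν : R) * D3 B j k ν * D3 B ν i l)
    -- (Ia)
    (hIa : ∀ i j k l : Fin n,
        ∑ ν, C (Δ ν : R) * (D3 A i j ν * D3 B ν k l + D3 B i j ν * D3 A ν k l) =
        ∑ ν, C (Δ ν : R) * (D3 A j k ν * D3 B ν i l + D3 B j k ν * D3 A ν i l))
    -- (IIa)
    (hIIa : ∀ i j k : Fin n,
        ∑ ν, C (Δ ν : R) * D3 A i j ν * pderiv ν (pderiv k G) =
        ∑ ν, C (Δ ν : R) * D3 A j k ν * pderiv ν (pderiv i G))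
    -- (IIb)
    (hIIb : ∀ i j k : Fin n,
        ∑ ν, C (Δ ν : R) * D3 B i j ν * pderiv ν (pderiv k G) =
        ∑ ν, C (Δ ν : R) * D3 B j k ν * pderiv ν (pderiv i G)) :
    OpenWDVV ((Fin.snoc
      (fun i => rename Fin.castSucc (C (Δ i : R) * pderiv i (A + B)))
      (rename Fin.castSucc G) : Fin (n + 1) → MvPolynomial (Fin (n + 1)) R)) := by
  set η : Fin n → R := fun ν => Δ ν
  have hS : ClosedWDVV η (A + B) := ClosedWDVV.add hIc hIb hIa
  have hSG : ClosedOpenCompatible η (A + B) G := ClosedOpenCompatible.add hIIa hIIb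
  convert openWDVV_rename_castSucc (P := Fin.snoc (fun i => C (η i) * pderiv i (A + B)) G)
    (fun j i k l => ?_) using 1
  · exact (Fin.comp_snoc _ _ _).symm
  induction j using Fin.lastCases with
  | last => simpa only [Fin.snoc_last, Fin.snoc_castSucc] using hSG.sum_D2_mul_D2 i k l
  | cast j => simpa only [Fin.snoc_castSucc] using hS.sum_D2_mul_D2 i j k l
end

section
/- Let S be a commutative ring and I an ideal of S such that S is I-adically complete (i.e., I-adically Hausdorff and complete). Let A be a free S-module with a finite basis of cardinality n, equipped with a commutative and associative S-bilinear multiplication. Suppose a_1,…,a_n ∈ A are elements such that a_i·a_j − δ_{ij}·a_i ∈ I·A for all i,j, and such that the images of a_1,…,a_n in A/IA form a basis of A/IA over S/I. Then there exist unique elements ξ_1,…,ξ_n ∈ A with ξ_i ≡ a_i (mod I·A) and ξ_i·ξ_j = δ_{ij}·ξ_i for all i,j; moreover ξ_1,…,ξ_n form an S-basis of A, so A is isomorphic as an S-algebra to the product algebra S^n. -/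
/-!
The Newton iteration `N(x) = 3x² - 2x³` for idempotents satisfies
`N(x)² - N(x) = (N(x) - x)² - 4(x² - x)²` with `N(x) - x = (x² - x) - 2x(x² - x)`, so it squares
the defect `x² - x` while moving `x` only within that defect. Since `A` is free of finite rank over
the `I`-adically complete ring `S`, it is `I`-adically complete, and iterating from `aᵢ` converges
to an idempotent `ξᵢ ≡ aᵢ`. Two idempotents congruent mod `IA` are equal, because `u - v` equals
its own cube; and `ξᵢξⱼ` (`i ≠ j`) is an idempotent in `IA`, hence `0`. Finally the `ξᵢ` span `A`
modulo `IA`, hence span `A` by Nakayama, and `n` vectors spanning a free module of rank `n` form a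
basis by the Orzech property of commutative rings.
-/

open Submodule

namespace Module.Basis

variable {S M ι : Type*} [CommRing S] [AddCommGroup M] [Module S M]

theorem mem_ideal_smul_top_iff (b : Basis ι S M) (J : Ideal S) {x : M} :
    x ∈ J • (⊤ : Submodule S M) ↔ ∀ i, b.repr x i ∈ J := by
  refine ⟨fun hx i ↦ ?_, fun h ↦ ?_⟩
  · refine smul_induction_on hx (fun r hr y _ ↦ ?_) (fun y z hy hz ↦ ?_)
    · simpa only [map_smul, Finsupp.smul_apply, smul_eq_mul] using J.mul_mem_right _ hr
    · simpa only [map_add, Finsupp.add_apply] using J.add_mem hy hz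
  · rw [← b.linearCombination_repr x, Finsupp.linearCombination_apply]
    exact Submodule.finsuppSum_mem _ _ _ _ fun i _ ↦ smul_mem_smul (h i) mem_top

theorem smodEq_ideal_pow_iff (b : Basis ι S M) (I : Ideal S) (k : ℕ) {x y : M} :
    x ≡ y [SMOD (I ^ k • ⊤ : Submodule S M)] ↔
      ∀ i, b.repr x i ≡ b.repr y i [SMOD (I ^ k • ⊤ : Submodule S S)] := by
  simp only [SModEq.sub_mem, b.mem_ideal_smul_top_iff, map_sub, Finsupp.sub_apply,
    Ideal.smul_eq_mul, Ideal.mul_top]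

theorem isHausdorff (b : Basis ι S M) (I : Ideal S) [IsHausdorff I S] : IsHausdorff I M where
  haus' x hx := b.repr.map_eq_zero_iff.mp <| Finsupp.ext fun i ↦
    IsHausdorff.haus' (I := I) _ fun k ↦ by simpa using (b.smodEq_ideal_pow_iff I k).mp (hx k) i

theorem isPrecomplete [Finite ι] (b : Basis ι S M) (I : Ideal S) [IsPrecomplete I S] :
    IsPrecomplete I M where
  prec' f hf := by
    choose c hc using fun i ↦ IsPrecomplete.prec (I := I) inferInstance
      fun {m k} hmk ↦ (b.smodEq_ideal_pow_iff I m).mp (hf hmk) i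
    refine ⟨b.equivFun.symm c, fun k ↦ (b.smodEq_ideal_pow_iff I k).mpr fun i ↦ ?_⟩
    simpa only [← b.equivFun_apply, b.equivFun.apply_symm_apply] using hc i k

theorem isAdicComplete [Finite ι] (b : Basis ι S M) (I : Ideal S) [IsAdicComplete I S] :
    IsAdicComplete I M where
  __ := b.isHausdorff I
  __ := b.isPrecomplete I

end Module.Basis

namespace LinearMap

variable {S M N P : Type*} [CommRing S] [AddCommGroup M] [Module S M] [AddCommGroup N]
  [Module S N] [AddCommGroup P] [Module S P] (f : M →ₗ[S] N →ₗ[S] P) {J K : Ideal S}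

theorem map₂_mem_smul_top_right (x : M) {y : N} (hy : y ∈ J • (⊤ : Submodule S N)) :
    f x y ∈ J • (⊤ : Submodule S P) :=
  smul_top_le_comap_smul_top J (f x) hy

theorem map₂_mem_smul_top_left {x : M} (hx : x ∈ J • (⊤ : Submodule S M)) (y : N) :
    f x y ∈ J • (⊤ : Submodule S P) :=
  smul_top_le_comap_smul_top J (f.flip y) hx

theorem map₂_mem_mul_smul_top {x : M} {y : N} (hx : x ∈ J • (⊤ : Submodule S M))
    (hy : y ∈ K • (⊤ : Submodule S N)) : f x y ∈ (J * K) • (⊤ : Submodule S P) := by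
  rw [Submodule.mul_smul]
  refine smul_induction_on hx (fun r hr z _ ↦ ?_) (fun u v hu hv ↦ ?_)
  · rw [map_smul, smul_apply]
    exact smul_mem_smul hr (f.map₂_mem_smul_top_right z hy)
  · rw [map_add, add_apply]
    exact add_mem hu hv

theorem map₂_smodEq {x x' : M} {y y' : N}
    (hx : x ≡ x' [SMOD J • (⊤ : Submodule S M)]) (hy : y ≡ y' [SMOD J • (⊤ : Submodule S N)]) :
    f x y ≡ f x' y' [SMOD J • (⊤ : Submodule S P)] := by
  rw [SModEq.sub_mem] at *
  have : f x y - f x' y' = f (x - x') y + f x' (y - y') := by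
    simp only [map_sub, sub_apply]; abel
  rw [this]
  exact add_mem (f.map₂_mem_smul_top_left hx y) (f.map₂_mem_smul_top_right x' hy)

end LinearMap

section Newton

variable {S A : Type*} [CommRing S] [AddCommGroup A] [Module S A] (mul : A →ₗ[S] A →ₗ[S] A)

def newtonIdempotent (x : A) : A := 3 • mul x x - 2 • mul x (mul x x)

theorem newtonIdempotent_sub_self (x : A) :
    newtonIdempotent mul x - x = (mul x x - x) - 2 • mul x (mul x x - x) := by
  simp only [newtonIdempotent, map_sub, smul_sub]
  abel

theorem newtonIdempotent_defect (hcomm : ∀ x y : A, mul x y = mul y x)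
    (hassoc : ∀ x y z : A, mul (mul x y) z = mul x (mul y z)) (x : A) :
    mul (newtonIdempotent mul x) (newtonIdempotent mul x) - newtonIdempotent mul x =
      mul (newtonIdempotent mul x - x) (newtonIdempotent mul x - x)
        - 4 • mul (mul x x - x) (mul x x - x) := by
  have hδ := newtonIdempotent_sub_self mul x
  generalize newtonIdempotent mul x = N at *
  obtain ⟨δ, rfl⟩ : ∃ δ, N = x + δ := ⟨N - x, by abel⟩
  generalize hd : mul x x - x = d at *
  rw [add_sub_cancel_left] at hδ ⊢
  have hxxd : mul x (mul x d) = mul x d + mul d d := by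
    rw [← hassoc, show mul x x = x + d by rw [← hd]; abel, map_add, LinearMap.add_apply]
  have hxδ : mul x δ = -mul x d - 2 • mul d d := by
    rw [hδ, map_sub, map_nsmul, hxxd]
    module
  calc mul (x + δ) (x + δ) - (x + δ) = d + 2 • mul x δ - δ + mul δ δ := by
        simp only [map_add, LinearMap.add_apply, hcomm δ x, ← hd]
        module
    _ = mul δ δ - 4 • mul d d := by
        rw [hxδ, hδ]
        module

variable {mul}

theorem newtonIdempotent_sub_self_mem {J : Ideal S} {x : A}
    (hx : mul x x - x ∈ J • (⊤ : Submodule S A)) :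
    newtonIdempotent mul x - x ∈ J • (⊤ : Submodule S A) := by
  rw [newtonIdempotent_sub_self]
  exact sub_mem hx (nsmul_mem (mul.map₂_mem_smul_top_right x hx) 2)

theorem newtonIdempotent_defect_mem (hcomm : ∀ x y : A, mul x y = mul y x)
    (hassoc : ∀ x y z : A, mul (mul x y) z = mul x (mul y z)) {J : Ideal S} {x : A}
    (hx : mul x x - x ∈ J • (⊤ : Submodule S A)) :
    mul (newtonIdempotent mul x) (newtonIdempotent mul x) - newtonIdempotent mul x
      ∈ (J * J) • (⊤ : Submodule S A) := by
  have hδ := newtonIdempotent_sub_self_mem hx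
  rw [newtonIdempotent_defect mul hcomm hassoc]
  exact sub_mem (mul.map₂_mem_mul_smul_top hδ hδ) (nsmul_mem (mul.map₂_mem_mul_smul_top hx hx) 4)

theorem defect_iterate_newtonIdempotent_mem (hcomm : ∀ x y : A, mul x y = mul y x)
    (hassoc : ∀ x y z : A, mul (mul x y) z = mul x (mul y z)) {I : Ideal S} {x : A}
    (hx : mul x x - x ∈ I • (⊤ : Submodule S A)) (k : ℕ) :
    mul ((newtonIdempotent mul)^[k] x) ((newtonIdempotent mul)^[k] x)
      - (newtonIdempotent mul)^[k] x ∈ (I ^ 2 ^ k) • (⊤ : Submodule S A) := by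
  induction k with
  | zero => simpa using hx
  | succ k ih =>
    rw [Function.iterate_succ_apply', pow_succ, pow_mul, sq]
    exact newtonIdempotent_defect_mem hcomm hassoc ih

end Newton

theorem IsPrecomplete.exists_smodEq_of_smodEq_succ {R M : Type*} [CommRing R] [AddCommGroup M]
    [Module R M] {I : Ideal R} [IsPrecomplete I M] {f : ℕ → M}
    (hf : ∀ k, f k ≡ f (k + 1) [SMOD (I ^ k • ⊤ : Submodule R M)]) :
    ∃ L, ∀ k, f k ≡ L [SMOD (I ^ k • ⊤ : Submodule R M)] := by
  refine IsPrecomplete.prec inferInstance fun {m k} hmk ↦ ?_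
  induction k, hmk using Nat.le_induction with
  | base => rfl
  | succ k hmk ih => exact ih.trans ((hf k).mono (smul_mono_left (Ideal.pow_le_pow_right hmk)))

theorem IsHausdorff.eq_zero_of_eq_map₂_of_mem {R M N : Type*} [CommRing R] [AddCommGroup M]
    [Module R M] [AddCommGroup N] [Module R N] {I : Ideal R} [IsHausdorff I M]
    (f : M →ₗ[R] N →ₗ[R] M) {z : M} {y : N} (hz : z = f z y) (hy : y ∈ I • (⊤ : Submodule R N)) :
    z = 0 := by
  refine IsHausdorff.haus' (I := I) z fun k ↦ SModEq.zero.mpr ?_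
  induction k with
  | zero => simp
  | succ k ih =>
    rw [pow_succ, hz]
    exact f.map₂_mem_mul_smul_top ih hy

section Idempotents

variable {S A : Type*} [CommRing S] [AddCommGroup A] [Module S A] {mul : A →ₗ[S] A →ₗ[S] A}
  {I : Ideal S}

theorem exists_idempotent_sub_mem [IsAdicComplete I A] (hcomm : ∀ x y : A, mul x y = mul y x)
    (hassoc : ∀ x y z : A, mul (mul x y) z = mul x (mul y z)) {x : A}
    (hx : mul x x - x ∈ I • (⊤ : Submodule S A)) :
    ∃ e, mul e e = e ∧ e - x ∈ I • (⊤ : Submodule S A) := by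
  set y : ℕ → A := fun k ↦ (newtonIdempotent mul)^[k] x
  have hdefect := defect_iterate_newtonIdempotent_mem hcomm hassoc hx
  have hstep : ∀ k, y k ≡ y (k + 1) [SMOD (I ^ k • ⊤ : Submodule S A)] := fun k ↦ by
    rw [SModEq.comm, SModEq.sub_mem]
    simp only [y, Function.iterate_succ_apply']
    exact smul_mono_left (Ideal.pow_le_pow_right Nat.lt_two_pow_self.le)
      (newtonIdempotent_sub_self_mem (hdefect k))
  obtain ⟨e, he⟩ := IsPrecomplete.exists_smodEq_of_smodEq_succ hstep
  refine ⟨e, sub_eq_zero.mp (IsHausdorff.haus' (I := I) _ fun k ↦ ?_), ?_⟩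
  · refine ((mul.map₂_smodEq (he k) (he k)).sub (he k)).symm.trans (SModEq.zero.mpr ?_)
    exact smul_mono_left (Ideal.pow_le_pow_right Nat.lt_two_pow_self.le) (hdefect k)
  · have he₁ : y 1 ≡ e [SMOD (I • ⊤ : Submodule S A)] := by simpa only [pow_one] using he 1
    exact SModEq.sub_mem.mp <|
      he₁.symm.trans (SModEq.sub_mem.mpr (newtonIdempotent_sub_self_mem hx))

theorem eq_of_idempotent_of_sub_mem [IsHausdorff I A] (hcomm : ∀ x y : A, mul x y = mul y x)
    (hassoc : ∀ x y z : A, mul (mul x y) z = mul x (mul y z)) {u v : A} (hu : mul u u = u)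
    (hv : mul v v = v) (huv : u - v ∈ I • (⊤ : Submodule S A)) : u = v := by
  have hcube : u - v = mul (u - v) (mul (u - v) (u - v)) := by
    have huuv : mul u (mul u v) = mul u v := by rw [← hassoc, hu]
    have hvuv : mul v (mul u v) = mul u v := by rw [hcomm u v, ← hassoc, hv, hcomm]
    simp only [map_sub, LinearMap.sub_apply, hu, hv, hcomm v u, huuv, hvuv]
    abel
  exact sub_eq_zero.mp <|
    IsHausdorff.eq_zero_of_eq_map₂_of_mem mul hcube (mul.map₂_mem_smul_top_left huv _)

theorem mul_eq_zero_of_idempotent_of_mem [IsHausdorff I A] (hcomm : ∀ x y : A, mul x y = mul y x)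
    (hassoc : ∀ x y z : A, mul (mul x y) z = mul x (mul y z)) {u v : A} (hu : mul u u = u)
    (hv : mul v v = v) (huv : mul u v ∈ I • (⊤ : Submodule S A)) : mul u v = 0 := by
  have hidem : mul u v = mul (mul u v) (mul u v) := by
    rw [hassoc u v, ← hassoc v u v, hcomm v u, hassoc u v v, hv, ← hassoc, hu]
  exact IsHausdorff.eq_zero_of_eq_map₂_of_mem mul hidem huv

end Idempotents

section Basis

variable {S M ι : Type*} [CommRing S] [AddCommGroup M] [Module S M]

theorem top_le_span_range_of_basis_quotient [Module.Finite S M] {I : Ideal S}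
    (hI : I ≤ (⊥ : Ideal S).jacobson) {v : ι → M}
    (bq : Module.Basis ι (S ⧸ I) (M ⧸ I • (⊤ : Submodule S M)))
    (hbq : ∀ i, bq i = Submodule.Quotient.mk (v i)) :
    ⊤ ≤ span S (Set.range v) := by
  refine le_of_le_smul_of_le_jacobson_bot Module.Finite.fg_top hI ?_
  have hrange : (I • ⊤ : Submodule S M).mkQ '' Set.range v = Set.range bq := by
    rw [← Set.range_comp]; exact congrArg Set.range (funext fun i ↦ (hbq i).symm)
  rw [top_le_iff, sup_comm, ← map_mkQ_eq_top, map_span, hrange,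
    ← restrictScalars_span S (S ⧸ I) Ideal.Quotient.mk_surjective, bq.span_eq,
    restrictScalars_top]

theorem Module.Basis.linearIndependent_of_top_le_span [Module.Finite S M]
    (b : Module.Basis ι S M) {v : ι → M} (hv : ⊤ ≤ span S (Set.range v)) :
    LinearIndependent S v :=
  OrzechProperty.injective_of_surjective_of_injective b.repr.symm.toLinearMap
    (Finsupp.linearCombination S v) b.repr.symm.injective
    (by rwa [← LinearMap.range_eq_top, Finsupp.range_linearCombination, ← top_le_iff])

theorem Module.Basis.equivFun_map₂_of_orthogonal [Finite ι] [DecidableEq ι] (b : Module.Basis ι S M)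
    {mul : M →ₗ[S] M →ₗ[S] M} (hb : ∀ i j, mul (b i) (b j) = if i = j then b i else 0)
    (x y : M) : b.equivFun (mul x y) = b.equivFun x * b.equivFun y := by
  have hbilin : mul.compr₂ b.equivFun.toLinearMap =
      (LinearMap.mul S (ι → S)).compl₁₂ b.equivFun.toLinearMap b.equivFun.toLinearMap := by
    refine LinearMap.ext_basis b b fun i j ↦ funext fun k ↦ ?_
    simp only [LinearMap.compr₂_apply, LinearMap.compl₁₂_apply, LinearMap.mul_apply',
      LinearEquiv.coe_coe, hb, Pi.mul_apply, b.equivFun_self]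
    split_ifs <;> simp_all
  exact LinearMap.congr_fun₂ hbilin x y

end Basis

/-- lifting an idempotent basis along an adically complete base. If `S` is
`I`-adically complete, `A` is a free `S`-module with a basis of cardinality `n` carrying a
commutative associative `S`-bilinear multiplication, and `a₁,…,aₙ` are orthogonal idempotents
modulo `I·A` whose images form a basis of `A/IA` over `S/I`, then there exist unique
`ξ₁,…,ξₙ ∈ A` with `ξᵢ ≡ aᵢ (mod I·A)` and `ξᵢ·ξⱼ = δᵢⱼ·ξᵢ`; moreover the `ξᵢ` form an
`S`-basis of `A`, so `A` is isomorphic as an `S`-algebra to the product algebra `Sⁿ`. -/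
theorem idempotent_basis_lift {S : Type*} [CommRing S] (I : Ideal S) [IsAdicComplete I S]
    {A : Type*} [AddCommGroup A] [Module S A] {n : ℕ} (bA : Module.Basis (Fin n) S A)
    (mul : A →ₗ[S] A →ₗ[S] A)
    (hcomm : ∀ x y : A, mul x y = mul y x)
    (hassoc : ∀ x y z : A, mul (mul x y) z = mul x (mul y z))
    (a : Fin n → A)
    (hidem : ∀ i j : Fin n,
      mul (a i) (a j) - (if i = j then a i else 0) ∈ (I • ⊤ : Submodule S A))
    (hbasis : ∃ bq : Module.Basis (Fin n) (S ⧸ I) (A ⧸ (I • ⊤ : Submodule S A)),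
      ∀ i, bq i = Submodule.Quotient.mk (a i)) :
    (∃! ξ : Fin n → A,
      (∀ i, ξ i - a i ∈ (I • ⊤ : Submodule S A)) ∧
      (∀ i j, mul (ξ i) (ξ j) = if i = j then ξ i else 0)) ∧
    (∀ ξ : Fin n → A,
      (∀ i, ξ i - a i ∈ (I • ⊤ : Submodule S A)) →
      (∀ i j, mul (ξ i) (ξ j) = if i = j then ξ i else 0) →
      ∃ b : Module.Basis (Fin n) S A, (∀ i, b i = ξ i) ∧
        ∃ e : A ≃ₗ[S] (Fin n → S), ∀ x y : A, e (mul x y) = e x * e y) := by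
  have := bA.isAdicComplete I
  choose ξ hξ hξa using fun i ↦ exists_idempotent_sub_mem hcomm hassoc (by simpa using hidem i i)
  have hξ_mul : ∀ i j, mul (ξ i) (ξ j) = if i = j then ξ i else 0 := fun i j ↦ by
    split_ifs with hij
    · exact hij ▸ hξ i
    refine mul_eq_zero_of_idempotent_of_mem (I := I) hcomm hassoc (hξ i) (hξ j) ?_
    have := (mul.map₂_smodEq (SModEq.sub_mem.mpr (hξa i)) (SModEq.sub_mem.mpr (hξa j))).trans
      (SModEq.sub_mem.mpr (hidem i j))
    rwa [if_neg hij, SModEq.zero] at this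
  refine ⟨⟨ξ, ⟨hξa, hξ_mul⟩, fun ζ ⟨hζa, hζ_mul⟩ ↦ funext fun i ↦ ?_⟩, fun ζ hζa hζ_mul ↦ ?_⟩
  · refine eq_of_idempotent_of_sub_mem (I := I) hcomm hassoc (by simpa using hζ_mul i i) (hξ i) ?_
    simpa using sub_mem (hζa i) (hξa i)
  obtain ⟨bq, hbq⟩ := hbasis
  have := Module.Finite.of_basis bA
  have hspan := top_le_span_range_of_basis_quotient (IsAdicComplete.le_jacobson_bot I) bq
    fun i ↦ (hbq i).trans (Submodule.Quotient.eq _ |>.mpr (by simpa using neg_mem (hζa i)))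
  let b := Module.Basis.mk (bA.linearIndependent_of_top_le_span hspan) hspan
  have hb : ∀ i, b i = ζ i := fun i ↦ by simp [b]
  exact ⟨b, hb, b.equivFun, b.equivFun_map₂_of_orthogonal (by simpa only [hb] using hζ_mul)⟩
end
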